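/- arXiv:1411.6784 — 3 statements merged into one kernel-verified Lean document; each statement's English description precedes it below -/
import Mathlib

section
/- Let C be a 3-MIPPC(n,M,q) over Q. Then there do not exist distinct elements a₁, a₂, a₃ ∈ Q and distinct vectors b₁, b₂, b₃ ∈ Q^{n−1} such that b₁, b₂ ∈ A¹_{a₁}, b₂, b₃ ∈ A¹_{a₂}, and b₁, b₃ ∈ A¹_{a₃}. -/
/-!
Reading the triangle as two sets of three codewords, `{(a₁,b₂), (a₂,b₃), (a₃,b₁)}` and
`{(a₁,b₁), (a₂,b₂), (a₃,b₃)}`, both have first coordinates `{a₁,a₂,a₃}` and tails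
`{b₁,b₂,b₃}`, so they have the same descendant set; but they are disjoint, so no codeword
is a parent common to all coalitions of size at most three generating it.
-/

/-- Codewords of length `m+1` over `Fin q`, written as a first coordinate together with the
vector of the remaining `m` coordinates. Descendant code of a sub-code. -/
def descS {m q : ℕ} (C' : Finset (Fin q × (Fin m → Fin q))) :
    Set (Fin q × (Fin m → Fin q)) :=
  {x | (∃ c ∈ C', c.1 = x.1) ∧ ∀ i, ∃ c ∈ C', c.2 i = x.2 i}

/-- The multimedia `t`-IPP property for such codes. -/
def isMIPPCS {m q : ℕ} (t : ℕ) (C : Finset (Fin q × (Fin m → Fin q))) : Prop :=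
  ∀ S : Set (Fin q × (Fin m → Fin q)),
    (∃ C' : Finset (Fin q × (Fin m → Fin q)),
        C' ⊆ C ∧ C'.Nonempty ∧ C'.card ≤ t ∧ descS C' = S) →
    ∃ c, ∀ C' : Finset (Fin q × (Fin m → Fin q)),
      C' ⊆ C → C'.Nonempty → C'.card ≤ t → descS C' = S → c ∈ C'

/-- `A¹_a`: the set of vectors of last coordinates of codewords whose first coordinate is `a`. -/
def A1S {m q : ℕ} (C : Finset (Fin q × (Fin m → Fin q))) (a : Fin q) :
    Finset (Fin m → Fin q) :=
  (C.filter (fun c => c.1 = a)).image Prod.snd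

section

variable {m q : ℕ}

theorem mem_A1S_iff {C : Finset (Fin q × (Fin m → Fin q))} {a : Fin q} {b : Fin m → Fin q} :
    b ∈ A1S C a ↔ (a, b) ∈ C := by
  simp [A1S]

theorem descS_eq_image (C' : Finset (Fin q × (Fin m → Fin q))) :
    descS C' = {x | x.1 ∈ C'.image Prod.fst ∧ ∀ i, ∃ b ∈ C'.image Prod.snd, b i = x.2 i} := by
  simp only [descS, Finset.exists_mem_image]
  simp only [Finset.mem_image]

theorem descS_eq_of_image_eq {C₁ C₂ : Finset (Fin q × (Fin m → Fin q))}
    (hfst : C₁.image Prod.fst = C₂.image Prod.fst)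
    (hsnd : C₁.image Prod.snd = C₂.image Prod.snd) :
    descS C₁ = descS C₂ := by
  rw [descS_eq_image, descS_eq_image, hfst, hsnd]

theorem isMIPPCS.not_disjoint_of_descS_eq {t : ℕ} {C C₁ C₂ : Finset (Fin q × (Fin m → Fin q))}
    (hC : isMIPPCS t C) (hsub₁ : C₁ ⊆ C) (hne₁ : C₁.Nonempty) (hcard₁ : C₁.card ≤ t)
    (hsub₂ : C₂ ⊆ C) (hne₂ : C₂.Nonempty) (hcard₂ : C₂.card ≤ t)
    (hdesc : descS C₁ = descS C₂) :
    ¬ Disjoint C₁ C₂ := by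
  obtain ⟨c, hc⟩ := hC (descS C₁) ⟨C₁, hsub₁, hne₁, hcard₁, rfl⟩
  exact Finset.not_disjoint_iff.2
    ⟨c, hc C₁ hsub₁ hne₁ hcard₁ rfl, hc C₂ hsub₂ hne₂ hcard₂ hdesc.symm⟩

end

/-- In a 3-MIPPC, there is no triangle configuration among the `A¹`-sets. -/
theorem condII_of_mippc3 {m q : ℕ} (C : Finset (Fin q × (Fin m → Fin q)))
    (hC : isMIPPCS 3 C) :
    ¬ ∃ (a₁ a₂ a₃ : Fin q) (b₁ b₂ b₃ : Fin m → Fin q),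
        a₁ ≠ a₂ ∧ a₁ ≠ a₃ ∧ a₂ ≠ a₃ ∧ b₁ ≠ b₂ ∧ b₁ ≠ b₃ ∧ b₂ ≠ b₃ ∧
        b₁ ∈ A1S C a₁ ∧ b₂ ∈ A1S C a₁ ∧ b₂ ∈ A1S C a₂ ∧ b₃ ∈ A1S C a₂ ∧
        b₁ ∈ A1S C a₃ ∧ b₃ ∈ A1S C a₃ := by
  rintro ⟨a₁, a₂, a₃, b₁, b₂, b₃, ha₁₂, ha₁₃, ha₂₃, hb₁₂, hb₁₃, hb₂₃,
    h₁₁, h₂₁, h₂₂, h₃₂, h₁₃, h₃₃⟩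
  simp only [mem_A1S_iff] at h₁₁ h₂₁ h₂₂ h₃₂ h₁₃ h₃₃
  set rotated : Finset (Fin q × (Fin m → Fin q)) := {(a₁, b₂), (a₂, b₃), (a₃, b₁)}
  set diagonal : Finset (Fin q × (Fin m → Fin q)) := {(a₁, b₁), (a₂, b₂), (a₃, b₃)}
  have hsub_rotated : rotated ⊆ C := by
    simp [rotated, Finset.insert_subset_iff, h₂₁, h₃₂, h₁₃]
  have hsub_diagonal : diagonal ⊆ C := by
    simp [diagonal, Finset.insert_subset_iff, h₁₁, h₂₂, h₃₃]
  have hdesc : descS rotated = descS diagonal := by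
    apply descS_eq_of_image_eq
    · simp [rotated, diagonal]
    · simp only [rotated, diagonal, Finset.image_insert, Finset.image_singleton]
      ext b
      simp only [Finset.mem_insert, Finset.mem_singleton]
      tauto
  have hdisj : Disjoint rotated diagonal := by
    simp [rotated, diagonal, ha₁₂, ha₁₃, ha₂₃, ha₁₂.symm, ha₁₃.symm, ha₂₃.symm, hb₁₂, hb₂₃, hb₁₃.symm]
  exact hC.not_disjoint_of_descS_eq hsub_rotated (Finset.insert_nonempty _ _) Finset.card_le_three
    hsub_diagonal (Finset.insert_nonempty _ _) Finset.card_le_three hdesc hdisj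
end

section
/- Let C be a (2,M,q) code over Q. Then C is a 3-MIPPC(2,M,q) if and only if both of the following hold: (I) for any distinct a₁, a₂ ∈ Q, |A¹_{a₁} ∩ A¹_{a₂}| ≤ 1; and (II) there do not exist distinct a₁, a₂, a₃ ∈ Q and distinct b₁, b₂, b₃ ∈ Q with b₁, b₂ ∈ A¹_{a₁}, b₂, b₃ ∈ A¹_{a₂}, and b₁, b₃ ∈ A¹_{a₃}. -/
/-- The descendant code of a sub-code of a code of length 2, viewed as a set of pairs. -/
def desc2 {q : ℕ} (C' : Finset (Fin q × Fin q)) : Set (Fin q × Fin q) :=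
  {x | (∃ c ∈ C', c.1 = x.1) ∧ (∃ c ∈ C', c.2 = x.2)}

/-- `C` is a `t`-MIPPC of length 2: for every descendant set produced by some nonempty
sub-code of size at most `t`, all such parent sets have a common codeword. -/
def isMIPPC2 {q : ℕ} (t : ℕ) (C : Finset (Fin q × Fin q)) : Prop :=
  ∀ S : Set (Fin q × Fin q),
    (∃ C' : Finset (Fin q × Fin q), C' ⊆ C ∧ C'.Nonempty ∧ C'.card ≤ t ∧ desc2 C' = S) →
    ∃ c, ∀ C' : Finset (Fin q × Fin q),
      C' ⊆ C → C'.Nonempty → C'.card ≤ t → desc2 C' = S → c ∈ C'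

/-- `A¹_a = {b : (a,b) ∈ C}`. -/
def A1 {q : ℕ} (C : Finset (Fin q × Fin q)) (a : Fin q) : Finset (Fin q) :=
  (C.filter (fun c => c.1 = a)).image Prod.snd

/-- Condition (I). -/
def CondI {q : ℕ} (C : Finset (Fin q × Fin q)) : Prop :=
  ∀ a₁ a₂ : Fin q, a₁ ≠ a₂ → (A1 C a₁ ∩ A1 C a₂).card ≤ 1

/-- Condition (II). -/
def CondII {q : ℕ} (C : Finset (Fin q × Fin q)) : Prop :=
  ¬ ∃ a₁ a₂ a₃ b₁ b₂ b₃ : Fin q,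
      a₁ ≠ a₂ ∧ a₁ ≠ a₃ ∧ a₂ ≠ a₃ ∧ b₁ ≠ b₂ ∧ b₁ ≠ b₃ ∧ b₂ ≠ b₃ ∧
      b₁ ∈ A1 C a₁ ∧ b₂ ∈ A1 C a₁ ∧ b₂ ∈ A1 C a₂ ∧ b₃ ∈ A1 C a₂ ∧
      b₁ ∈ A1 C a₃ ∧ b₃ ∈ A1 C a₃

/-!
Read `C` as a bipartite graph between rows and columns; condition (I) forbids 4-cycles and
condition (II) forbids 6-cycles. A descendant set `desc2 C'` is the product of the row set `X` and
the column set `Y` of `C'`, so the parent sets of a descendant are the edge covers of `X ∪ Y` by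
at most three edges of `C`.

If a 4-cycle or a 6-cycle exists, its two perfect matchings are disjoint parent sets of the same
descendant. Conversely, a vertex of `X ∪ Y` with only one neighbour inside `X × Y` forces its edge
into every parent set. If there is no such leaf, every vertex has two neighbours, and since `X` has
at most three rows, following neighbours from any edge closes a 4-cycle or a 6-cycle.
-/

open Finset

section

variable {q : ℕ}

lemma mem_A1 {C : Finset (Fin q × Fin q)} {a b : Fin q} : b ∈ A1 C a ↔ (a, b) ∈ C := by
  simp [A1]

lemma condI_iff (C : Finset (Fin q × Fin q)) :
    CondI C ↔ ¬ ∃ a₁ a₂ b₁ b₂ : Fin q, a₁ ≠ a₂ ∧ b₁ ≠ b₂ ∧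
      (a₁, b₁) ∈ C ∧ (a₁, b₂) ∈ C ∧ (a₂, b₁) ∈ C ∧ (a₂, b₂) ∈ C := by
  simp only [CondI, card_le_one, mem_inter, mem_A1]
  grind

lemma condII_iff (C : Finset (Fin q × Fin q)) :
    CondII C ↔ ¬ ∃ a₁ a₂ a₃ b₁ b₂ b₃ : Fin q,
      a₁ ≠ a₂ ∧ a₁ ≠ a₃ ∧ a₂ ≠ a₃ ∧ b₁ ≠ b₂ ∧ b₁ ≠ b₃ ∧ b₂ ≠ b₃ ∧
      (a₁, b₁) ∈ C ∧ (a₁, b₂) ∈ C ∧ (a₂, b₂) ∈ C ∧ (a₂, b₃) ∈ C ∧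
      (a₃, b₁) ∈ C ∧ (a₃, b₃) ∈ C := by
  simp only [CondII, mem_A1]

lemma desc2_eq_prod (D : Finset (Fin q × Fin q)) :
    desc2 D = (D.image Prod.fst : Set (Fin q)) ×ˢ (D.image Prod.snd : Set (Fin q)) := by
  ext x
  simp [desc2]

lemma desc2_eq_desc2_iff {D₁ D₂ : Finset (Fin q × Fin q)} (h₁ : D₁.Nonempty) :
    desc2 D₁ = desc2 D₂ ↔
      D₁.image Prod.fst = D₂.image Prod.fst ∧ D₁.image Prod.snd = D₂.image Prod.snd := by
  rw [desc2_eq_prod, desc2_eq_prod, Set.prod_eq_prod_iff_of_nonempty, coe_inj, coe_inj]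
  simpa [Set.prod_nonempty_iff] using h₁

lemma not_isMIPPC2_of_disjoint {t : ℕ} {C D₁ D₂ : Finset (Fin q × Fin q)}
    (hD₁ : D₁ ⊆ C) (hD₂ : D₂ ⊆ C) (hne : D₁.Nonempty) (hcard₁ : D₁.card ≤ t)
    (hcard₂ : D₂.card ≤ t) (hdisj : Disjoint D₁ D₂)
    (hfst : D₁.image Prod.fst = D₂.image Prod.fst)
    (hsnd : D₁.image Prod.snd = D₂.image Prod.snd) : ¬ isMIPPC2 t C := by
  intro hC
  have hne₂ : D₂.Nonempty := by simpa [hfst] using hne.image Prod.fst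
  have hdesc : desc2 D₂ = desc2 D₁ := ((desc2_eq_desc2_iff hne).2 ⟨hfst, hsnd⟩).symm
  obtain ⟨c, hc⟩ := hC _ ⟨D₁, hD₁, hne, hcard₁, rfl⟩
  exact disjoint_left.1 hdisj (hc D₁ hD₁ hne hcard₁ rfl) (hc D₂ hD₂ hne₂ hcard₂ hdesc)

section Cycles

variable {t : ℕ} {C : Finset (Fin q × Fin q)}

lemma not_isMIPPC2_of_four_cycle (ht : 2 ≤ t) {a₁ a₂ b₁ b₂ : Fin q} (ha : a₁ ≠ a₂)
    (hb : b₁ ≠ b₂) (h₁₁ : (a₁, b₁) ∈ C) (h₁₂ : (a₁, b₂) ∈ C) (h₂₁ : (a₂, b₁) ∈ C)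
    (h₂₂ : (a₂, b₂) ∈ C) : ¬ isMIPPC2 t C := by
  refine not_isMIPPC2_of_disjoint (D₁ := {(a₁, b₁), (a₂, b₂)}) (D₂ := {(a₁, b₂), (a₂, b₁)})
    ?_ ?_ (insert_nonempty _ _) (card_le_two.trans ht) (card_le_two.trans ht) ?_ ?_ ?_
  · simp [insert_subset_iff, h₁₁, h₂₂]
  · simp [insert_subset_iff, h₁₂, h₂₁]
  · simp [*, Ne.symm]
  · simp
  · simp [pair_comm]

lemma not_isMIPPC2_of_six_cycle (ht : 3 ≤ t) {a₁ a₂ a₃ b₁ b₂ b₃ : Fin q} (ha₁₂ : a₁ ≠ a₂)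
    (ha₁₃ : a₁ ≠ a₃) (ha₂₃ : a₂ ≠ a₃) (hb₁₂ : b₁ ≠ b₂) (hb₁₃ : b₁ ≠ b₃) (hb₂₃ : b₂ ≠ b₃)
    (h₁₁ : (a₁, b₁) ∈ C) (h₁₂ : (a₁, b₂) ∈ C) (h₂₂ : (a₂, b₂) ∈ C) (h₂₃ : (a₂, b₃) ∈ C)
    (h₃₁ : (a₃, b₁) ∈ C) (h₃₃ : (a₃, b₃) ∈ C) : ¬ isMIPPC2 t C := by
  refine not_isMIPPC2_of_disjoint (D₁ := {(a₁, b₁), (a₂, b₂), (a₃, b₃)})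
    (D₂ := {(a₁, b₂), (a₂, b₃), (a₃, b₁)}) ?_ ?_ (insert_nonempty _ _)
    (card_le_three.trans ht) (card_le_three.trans ht) ?_ ?_ ?_
  · simp [insert_subset_iff, h₁₁, h₂₂, h₃₃]
  · simp [insert_subset_iff, h₁₂, h₂₃, h₃₁]
  · simp [*, Ne.symm]
  · simp
  · simp [pair_comm b₃ b₁, insert_comm b₂ b₁]

end Cycles

section Forcing

variable {C C' : Finset (Fin q × Fin q)} {X Y : Finset (Fin q)}

lemma mem_of_row_leaf (hC' : C' ⊆ C) (hfst : C'.image Prod.fst = X)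
    (hsnd : C'.image Prod.snd = Y) {a b : Fin q} (ha : a ∈ X)
    (hleaf : ∀ b' ∈ Y, (a, b') ∈ C → b' = b) : (a, b) ∈ C' := by
  rw [← hfst, mem_image] at ha
  obtain ⟨⟨a', b'⟩, hab', rfl⟩ := ha
  obtain rfl : b' = b := hleaf b' (hsnd ▸ mem_image_of_mem _ hab') (hC' hab')
  exact hab'

lemma mem_of_col_leaf (hC' : C' ⊆ C) (hfst : C'.image Prod.fst = X)
    (hsnd : C'.image Prod.snd = Y) {a b : Fin q} (hb : b ∈ Y)
    (hleaf : ∀ a' ∈ X, (a', b) ∈ C → a' = a) : (a, b) ∈ C' := by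
  rw [← hsnd, mem_image] at hb
  obtain ⟨⟨a', b'⟩, hab', rfl⟩ := hb
  obtain rfl : a' = a := hleaf a' (hfst ▸ mem_image_of_mem _ hab') (hC' hab')
  exact hab'

lemma false_of_no_leaf (hI : CondI C) (hII : CondII C) (hX : X.card ≤ 3)
    (hrow : ∀ a ∈ X, ∀ b, ∃ b' ∈ Y, b' ≠ b ∧ (a, b') ∈ C)
    (hcol : ∀ b ∈ Y, ∀ a, ∃ a' ∈ X, a' ≠ a ∧ (a', b) ∈ C)
    {a₁ b₁ : Fin q} (ha₁ : a₁ ∈ X) (hb₁ : b₁ ∈ Y) (h₁₁ : (a₁, b₁) ∈ C) : False := by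
  rw [condI_iff] at hI
  rw [condII_iff] at hII
  obtain ⟨b₂, hb₂, hb₂₁, h₁₂⟩ := hrow a₁ ha₁ b₁
  obtain ⟨a₂, ha₂, ha₂₁, h₂₂⟩ := hcol b₂ hb₂ a₁
  obtain ⟨b₃, hb₃, hb₃₂, h₂₃⟩ := hrow a₂ ha₂ b₂
  obtain ⟨a₃, ha₃, ha₃₁, h₃₁⟩ := hcol b₁ hb₁ a₁
  obtain ⟨a₄, ha₄, ha₄₂, h₄₃⟩ := hcol b₃ hb₃ a₂
  have hb₃₁ : b₃ ≠ b₁ := by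
    rintro rfl
    exact hI ⟨a₁, a₂, b₃, b₂, ha₂₁.symm, hb₃₂, h₁₁, h₁₂, h₂₃, h₂₂⟩
  have ha₃₂ : a₃ ≠ a₂ := by
    rintro rfl
    exact hI ⟨a₁, a₃, b₁, b₂, ha₂₁.symm, hb₂₁.symm, h₁₁, h₁₂, h₃₁, h₂₂⟩
  have hcard : ({a₁, a₂, a₃} : Finset (Fin q)).card = 3 :=
    card_eq_three.2 ⟨a₁, a₂, a₃, ha₂₁.symm, ha₃₁.symm, ha₃₂.symm, rfl⟩
  have hXeq : X = {a₁, a₂, a₃} :=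
    (eq_of_subset_of_card_le (by simp [insert_subset_iff, ha₁, ha₂, ha₃]) (hcard ▸ hX)).symm
  rw [hXeq] at ha₄
  simp only [mem_insert, mem_singleton] at ha₄
  rcases ha₄ with rfl | rfl | rfl
  · exact hI ⟨a₄, a₂, b₂, b₃, ha₂₁.symm, hb₃₂.symm, h₁₂, h₄₃, h₂₂, h₂₃⟩
  · exact ha₄₂ rfl
  · exact hII ⟨a₁, a₂, a₄, b₁, b₂, b₃, ha₂₁.symm, ha₃₁.symm, ha₃₂.symm, hb₂₁.symm,
      hb₃₁.symm, hb₃₂.symm, h₁₁, h₁₂, h₂₂, h₂₃, h₃₁, h₄₃⟩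

lemma exists_common_mem_of_condI_condII (hI : CondI C) (hII : CondII C)
    {C₀ : Finset (Fin q × Fin q)} (hC₀ : C₀ ⊆ C) (hne : C₀.Nonempty) (hcard : C₀.card ≤ 3) :
    ∃ c, ∀ C' ⊆ C, C'.image Prod.fst = C₀.image Prod.fst →
      C'.image Prod.snd = C₀.image Prod.snd → c ∈ C' := by
  by_contra! hnone
  obtain ⟨⟨a, b⟩, hab⟩ := hne
  refine false_of_no_leaf hI hII (card_image_le.trans hcard) ?_ ?_
    (mem_image_of_mem Prod.fst hab) (mem_image_of_mem Prod.snd hab) (hC₀ hab)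
  · intro a ha b
    by_contra! hleaf
    obtain ⟨C', hC', hfst, hsnd, hab'⟩ := hnone (a, b)
    exact hab' (mem_of_row_leaf hC' hfst hsnd ha fun b' hb' h ↦ by_contra (hleaf b' hb' · h))
  · intro b hb a
    by_contra! hleaf
    obtain ⟨C', hC', hfst, hsnd, hab'⟩ := hnone (a, b)
    exact hab' (mem_of_col_leaf hC' hfst hsnd hb fun a' ha' h ↦ by_contra (hleaf a' ha' · h))

end Forcing

end

/-- A `(2,M,q)` code is a 3-MIPPC iff conditions (I) and (II) hold. -/
theorem mippc3_iff_condI_condII {q : ℕ} (C : Finset (Fin q × Fin q)) :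
    isMIPPC2 3 C ↔ CondI C ∧ CondII C := by
  refine ⟨fun hC ↦ ⟨?_, ?_⟩, fun ⟨hI, hII⟩ ↦ ?_⟩
  · rw [condI_iff]
    rintro ⟨a₁, a₂, b₁, b₂, ha, hb, h₁₁, h₁₂, h₂₁, h₂₂⟩
    exact not_isMIPPC2_of_four_cycle (by norm_num) ha hb h₁₁ h₁₂ h₂₁ h₂₂ hC
  · rw [condII_iff]
    rintro ⟨a₁, a₂, a₃, b₁, b₂, b₃, ha₁₂, ha₁₃, ha₂₃, hb₁₂, hb₁₃, hb₂₃,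
      h₁₁, h₁₂, h₂₂, h₂₃, h₃₁, h₃₃⟩
    exact not_isMIPPC2_of_six_cycle le_rfl ha₁₂ ha₁₃ ha₂₃ hb₁₂ hb₁₃ hb₂₃
      h₁₁ h₁₂ h₂₂ h₂₃ h₃₁ h₃₃ hC
  · rintro S ⟨C₀, hC₀, hne, hcard, rfl⟩
    obtain ⟨c, hc⟩ := exists_common_mem_of_condI_condII hI hII hC₀ hne hcard
    refine ⟨c, fun C' hC' hne' _ hdesc ↦ ?_⟩
    obtain ⟨hfst, hsnd⟩ := (desc2_eq_desc2_iff hne').1 hdesc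
    exact hc C' hC' hfst hsnd
end

section
/- If a bipartite multigraph-free graph G with parts X, Y (|X| = |Y| = q) contains a cycle of length 2t₀ for some 2 ≤ t₀ ≤ t, then the corresponding code C = {(a,b) : ab ∈ E(G)} ⊆ X × Y admits two disjoint sub-codes C₁, C₂, each of size t₀ ≤ t, with desc(C₁) = desc(C₂); hence C is not a t-MIPPC. -/
/-!
Read as codewords, the edges `aᵢbᵢ` and the edges `aᵢ₊₁bᵢ` of the cycle form two parent sets.
They are disjoint because consecutive vertices `aᵢ, aᵢ₊₁` are distinct, yet both use exactly
the vertices `{aᵢ}` and `{bᵢ}`, so they have the same descendant set. A `t`-MIPPC would need a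
codeword common to both.
-/

open Finset

theorem desc2_eq_of_image_eq {q : ℕ} {C D : Finset (Fin q × Fin q)}
    (h₁ : C.image Prod.fst = D.image Prod.fst) (h₂ : C.image Prod.snd = D.image Prod.snd) :
    desc2 C = desc2 D := by
  ext x
  have hC : x ∈ desc2 C ↔ x.1 ∈ C.image Prod.fst ∧ x.2 ∈ C.image Prod.snd := by
    simp [desc2]
  have hD : x ∈ desc2 D ↔ x.1 ∈ D.image Prod.fst ∧ x.2 ∈ D.image Prod.snd := by
    simp [desc2]
  rw [hC, hD, h₁, h₂]

theorem not_isMIPPC2_of_disjoint_s17 {q t : ℕ} {C C₁ C₂ : Finset (Fin q × Fin q)}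
    (hC₁ : C₁ ⊆ C) (hC₂ : C₂ ⊆ C) (hne₁ : C₁.Nonempty) (hne₂ : C₂.Nonempty)
    (ht₁ : C₁.card ≤ t) (ht₂ : C₂.card ≤ t) (hdisj : Disjoint C₁ C₂)
    (hdesc : desc2 C₁ = desc2 C₂) : ¬ isMIPPC2 t C := by
  intro hC
  obtain ⟨c, hc⟩ := hC (desc2 C₁) ⟨C₁, hC₁, hne₁, ht₁, rfl⟩
  exact disjoint_left.mp hdisj (hc C₁ hC₁ hne₁ ht₁ rfl) (hc C₂ hC₂ hne₂ ht₂ hdesc.symm)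

theorem Nat.image_range_add_one_mod (n : ℕ) :
    (range n).image (fun i => (i + 1) % n) = range n := by
  have h := image_image (s := range n) (g := (· % n)) (f := (· + 1))
  rw [range_eq_Ico, image_add_right_Ico, zero_add, add_comm, Nat.image_Ico_mod,
    ← range_eq_Ico] at h
  exact h.symm

theorem Nat.add_one_mod_ne_self {n i : ℕ} (hn : 2 ≤ n) (hi : i < n) : (i + 1) % n ≠ i := by
  obtain hlt | rfl : i + 1 < n ∨ i + 1 = n := by omega
  · rw [Nat.mod_eq_of_lt hlt]
    omega
  · rw [Nat.mod_self]
    omega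

section Cycle

variable {α β : Type*} [DecidableEq α] [DecidableEq β] (n : ℕ) (a : ℕ → α) (b : ℕ → β)

/-- `cycleMatching` and `cycleMatching'` are the two perfect matchings `{aᵢbᵢ}` and `{aᵢ₊₁bᵢ}`
(indices mod `n`) into which the cycle `a₀b₀a₁b₁⋯aₙ₋₁bₙ₋₁` splits. -/
def cycleMatching : Finset (α × β) := (range n).image fun i => (a i, b i)

def cycleMatching' : Finset (α × β) := (range n).image fun i => (a ((i + 1) % n), b i)

variable {n a b}

theorem card_image_range_of_injOn_snd {f : ℕ → α × β}
    (hf : Set.InjOn (fun i => (f i).2) (range n)) :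
    ((range n).image f).card = n := by
  rw [card_image_of_injOn fun i hi j hj h => hf hi hj (congrArg Prod.snd h), card_range]

theorem card_cycleMatching (hb : Set.InjOn b (range n)) : (cycleMatching n a b).card = n :=
  card_image_range_of_injOn_snd hb

theorem card_cycleMatching' (hb : Set.InjOn b (range n)) : (cycleMatching' n a b).card = n :=
  card_image_range_of_injOn_snd hb

theorem image_fst_cycleMatching' :
    (cycleMatching' n a b).image Prod.fst = (cycleMatching n a b).image Prod.fst := by
  calc (cycleMatching' n a b).image Prod.fst = ((range n).image fun i => (i + 1) % n).image a := by
        simp only [cycleMatching', image_image]; rfl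
    _ = (cycleMatching n a b).image Prod.fst := by
        rw [Nat.image_range_add_one_mod, cycleMatching, image_image]; rfl

theorem image_snd_cycleMatching' :
    (cycleMatching' n a b).image Prod.snd = (cycleMatching n a b).image Prod.snd := by
  simp only [cycleMatching, cycleMatching', image_image]
  rfl

theorem disjoint_cycleMatching (hn : 2 ≤ n) (ha : Set.InjOn a (range n))
    (hb : Set.InjOn b (range n)) :
    Disjoint (cycleMatching n a b) (cycleMatching' n a b) := by
  simp only [cycleMatching, cycleMatching', disjoint_left, mem_image, mem_range]
  rintro _ ⟨i, hi, rfl⟩ ⟨j, hj, hji⟩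
  obtain rfl : j = i := hb (mem_range.2 hj) (mem_range.2 hi) (congrArg Prod.snd hji)
  exact Nat.add_one_mod_ne_self hn hj <|
    ha (mem_range.2 (Nat.mod_lt _ (by omega))) (mem_range.2 hj) (congrArg Prod.fst hji)

end Cycle

/-- If the bipartite graph associated with a length-2 code contains a `2t₀`-cycle with
`2 ≤ t₀ ≤ t`, then the code has two disjoint sub-codes of size `t₀` with the same
descendant code; hence it is not a `t`-MIPPC. -/
theorem not_mippc_of_cycle {q t t₀ : ℕ} (C : Finset (Fin q × Fin q))
    (h2 : 2 ≤ t₀) (htt : t₀ ≤ t) (a b : ℕ → Fin q)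
    (ha : ∀ i j, i < t₀ → j < t₀ → a i = a j → i = j)
    (hb : ∀ i j, i < t₀ → j < t₀ → b i = b j → i = j)
    (he₁ : ∀ i, i < t₀ → (a i, b i) ∈ C)
    (he₂ : ∀ i, i < t₀ → (a ((i + 1) % t₀), b i) ∈ C) :
    (∃ C₁ C₂ : Finset (Fin q × Fin q),
      C₁ ⊆ C ∧ C₂ ⊆ C ∧ C₁.card = t₀ ∧ C₂.card = t₀ ∧ Disjoint C₁ C₂ ∧
      desc2 C₁ = desc2 C₂) ∧
    ¬ isMIPPC2 t C := by
  have ha' : Set.InjOn a (range t₀) := fun i hi j hj => ha i j (mem_range.1 hi) (mem_range.1 hj)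
  have hb' : Set.InjOn b (range t₀) := fun i hi j hj => hb i j (mem_range.1 hi) (mem_range.1 hj)
  have hsub₁ : cycleMatching t₀ a b ⊆ C := image_subset_iff.2 fun i hi => he₁ i (mem_range.1 hi)
  have hsub₂ : cycleMatching' t₀ a b ⊆ C := image_subset_iff.2 fun i hi => he₂ i (mem_range.1 hi)
  have hdesc : desc2 (cycleMatching t₀ a b) = desc2 (cycleMatching' t₀ a b) :=
    desc2_eq_of_image_eq image_fst_cycleMatching'.symm image_snd_cycleMatching'.symm
  have hcard₁ := card_cycleMatching (a := a) hb'
  have hcard₂ := card_cycleMatching' (a := a) hb'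
  have hdisj := disjoint_cycleMatching h2 ha' hb'
  refine ⟨⟨_, _, hsub₁, hsub₂, hcard₁, hcard₂, hdisj, hdesc⟩, ?_⟩
  exact not_isMIPPC2_of_disjoint_s17 hsub₁ hsub₂ (card_pos.1 (by omega)) (card_pos.1 (by omega))
    (by omega) (by omega) hdisj hdesc
end
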